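/- arXiv:2105.12561 — 2 statements merged into one kernel-verified Lean document; each statement's English description precedes it below -/
import Mathlib

section
/- Let $E/F$ be a separable quadratic extension and $B = E \oplus Ej$ a quaternion algebra with $j^2 = \epsilon$. The map $\mathrm{inv}(a+bj) = \epsilon\,\mathrm{Nm}(b)/\mathrm{Nm}(a)$ induces a bijection from the double coset space $E^\times \backslash B^\times / E^\times$ (for the action $(h_1,h_2)\cdot \gamma = h_1^{-1}\gamma h_2$) onto $(\epsilon\,\mathrm{Nm}(E^\times) \setminus \{1\}) \cup \{0,\infty\}$, where the invariant is $0$ when $b = 0$ and $\infty$ when $a = 0$. -/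
attribute [local instance] Classical.propDecidable

/-!
For `g = a + bj` with `a ≠ 0`, conjugating by `h₁, h₂ ∈ E^×` multiplies `a` by `h₁⁻¹ h₂` and `b`
by `h₁⁻¹ σ(h₂)`, so `ε Nm(b)/Nm(a)` is unchanged because `Nm(σ h₂) = Nm(h₂)`. Conversely, once
`h₂ = a⁻¹ h₁ a'` aligns the first coordinates, matching the second ones asks for
`σ(h₁)/h₁ = t` with an explicit `t` of norm one when the invariants agree; such an `h₁` exists
by Hilbert 90 for the quadratic extension. Surjectivity is witnessed by `1 + cj`, `1` and `j`,
and the value `1` is excluded because `a + bj` with `Nm(a) = ε Nm(b)` is not invertible.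
-/

section Involution

variable {E G : Type*} [Field E] [FunLike G E E] [RingHomClass G E E] {σ : G}

theorem mul_apply_eq_zero_iff {x : E} : x * σ x = 0 ↔ x = 0 := by
  simp [map_eq_zero]

theorem mul_apply_mul (x y : E) : x * y * σ (x * y) = x * σ x * (y * σ y) := by
  rw [map_mul]; ring

theorem mul_apply_inv (x : E) : x⁻¹ * σ x⁻¹ = (x * σ x)⁻¹ := by
  rw [map_inv₀, mul_inv]

/-- Hilbert 90 for the quadratic extension cut out by a nontrivial involution. -/
theorem exists_apply_eq_mul_of_mul_apply_eq_one (hσ : Function.Involutive σ)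
    (hσ_ne : ∃ x, σ x ≠ x) {t : E} (ht : t * σ t = 1) : ∃ h : E, h ≠ 0 ∧ σ h = t * h := by
  by_cases hc : 1 + σ t = 0
  · obtain ⟨x, hx⟩ := hσ_ne
    have ht' : t = -1 := by
      rw [← hσ t, show σ t = -1 by linear_combination hc, map_neg, map_one]
    refine ⟨x - σ x, sub_ne_zero.2 hx.symm, ?_⟩
    rw [map_sub, hσ x, ht']
    ring
  · refine ⟨1 + σ t, hc, ?_⟩
    rw [map_add, map_one, hσ t]
    linear_combination -ht

theorem exists_eq_inv_mul_mul_apply_of_norm_eq (hσ : Function.Involutive σ)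
    (hσ_ne : ∃ x, σ x ≠ x) {a b a' b' : E} (ha : a ≠ 0) (ha' : a' ≠ 0)
    (hnorm : b * σ b * (a' * σ a') = b' * σ b' * (a * σ a)) :
    ∃ h : E, h ≠ 0 ∧ b' = h⁻¹ * b * σ (a⁻¹ * h * a') := by
  have hσa : σ a ≠ 0 := (map_ne_zero σ).2 ha
  have hσa' : σ a' ≠ 0 := (map_ne_zero σ).2 ha'
  by_cases hb : b = 0
  · have hb' : b' = 0 := by
      simpa [hb, ha, mul_apply_eq_zero_iff] using hnorm.symm
    exact ⟨1, one_ne_zero, by simp [hb, hb']⟩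
  have hσb : σ b ≠ 0 := (map_ne_zero σ).2 hb
  set t := σ a * b' / (b * σ a') with ht_def
  have ht : t * σ t = 1 := by
    rw [ht_def, map_div₀, map_mul, map_mul, hσ a, hσ a']
    field_simp
    linear_combination -hnorm
  obtain ⟨h, hh, hσh⟩ := exists_apply_eq_mul_of_mul_apply_eq_one hσ hσ_ne ht
  refine ⟨h, hh, ?_⟩
  rw [map_mul, map_mul, map_inv₀, hσh, ht_def]
  field_simp

end Involution

section DoubleCoset

variable {E G : Type*} [Field E] [FunLike G E E] [RingHomClass G E E]

/-- `ε Nm(b)/Nm(a)` for `g = a + bj`, where `none` encodes the value `∞` taken when `a = 0`. -/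
noncomputable def doubleCosetInvariant (σ : G) (ε : E) (g : E × E) : Option E :=
  if g.1 = 0 then none else some (ε * (g.2 * σ g.2) / (g.1 * σ g.1))

variable {σ : G} {ε : E}

theorem doubleCosetInvariant_inv_mul_mul (hσ : Function.Involutive σ) (g : E × E) (h₁ h₂ : Eˣ) :
    doubleCosetInvariant σ ε ((h₁ : E)⁻¹ * g.1 * h₂, (h₁ : E)⁻¹ * g.2 * σ h₂) =
      doubleCosetInvariant σ ε g := by
  have hN₁ : (h₁ : E) * σ h₁ ≠ 0 := mul_apply_eq_zero_iff.not.2 h₁.ne_zero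
  have hN₂ : (h₂ : E) * σ h₂ ≠ 0 := mul_apply_eq_zero_iff.not.2 h₂.ne_zero
  by_cases ha : g.1 = 0
  · simp [doubleCosetInvariant, ha]
  have hNa : g.1 * σ g.1 ≠ 0 := mul_apply_eq_zero_iff.not.2 ha
  simp only [doubleCosetInvariant, ha, mul_eq_zero, inv_eq_zero, Units.ne_zero, or_self,
    if_false, mul_apply_mul, mul_apply_inv, show ∀ x, σ (σ x) = x from hσ]
  congr 1
  field_simp

theorem exists_units_of_doubleCosetInvariant_eq (hσ : Function.Involutive σ)
    (hσ_ne : ∃ x, σ x ≠ x) (hε : ε ≠ 0) {g g' : E × E} (hg : g ≠ 0) (hg' : g' ≠ 0)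
    (heq : doubleCosetInvariant σ ε g = doubleCosetInvariant σ ε g') :
    ∃ h₁ h₂ : Eˣ, g'.1 = (h₁ : E)⁻¹ * g.1 * h₂ ∧ g'.2 = (h₁ : E)⁻¹ * g.2 * σ h₂ := by
  obtain ⟨a, b⟩ := g
  obtain ⟨a', b'⟩ := g'
  by_cases ha : a = 0
  · have ha' : a' = 0 := by
      by_contra ha'
      simp [doubleCosetInvariant, ha, ha'] at heq
    have hb : b ≠ 0 := by rintro rfl; exact hg (by simp [ha])
    have hb' : b' ≠ 0 := by rintro rfl; exact hg' (by simp [ha'])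
    refine ⟨Units.mk0 (b / b') (div_ne_zero hb hb'), 1, by simp [ha, ha'], ?_⟩
    simp only [Units.val_mk0, Units.val_one, map_one, mul_one]
    field_simp
  have ha' : a' ≠ 0 := by
    rintro rfl
    simp [doubleCosetInvariant, ha] at heq
  have hNa := (mul_apply_eq_zero_iff (σ := σ)).not.2 ha
  have hNa' := (mul_apply_eq_zero_iff (σ := σ)).not.2 ha'
  have hnorm : b * σ b * (a' * σ a') = b' * σ b' * (a * σ a) := by
    simp only [doubleCosetInvariant, ha, ha', if_false, Option.some.injEq] at heq
    rw [div_eq_div_iff hNa hNa'] at heq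
    exact mul_left_cancel₀ hε (by linear_combination heq)
  obtain ⟨h, hh, hb'⟩ := exists_eq_inv_mul_mul_apply_of_norm_eq hσ hσ_ne ha ha' hnorm
  refine ⟨Units.mk0 h hh, Units.mk0 (a⁻¹ * h * a') (by simp [ha, hh, ha']), ?_, hb'⟩
  simp only [Units.val_mk0]
  field_simp

theorem exists_units_iff_doubleCosetInvariant_eq (hσ : Function.Involutive σ)
    (hσ_ne : ∃ x, σ x ≠ x) (hε : ε ≠ 0) {g g' : E × E} (hg : g ≠ 0) (hg' : g' ≠ 0) :
    (∃ h₁ h₂ : Eˣ, g'.1 = (h₁ : E)⁻¹ * g.1 * h₂ ∧ g'.2 = (h₁ : E)⁻¹ * g.2 * σ h₂) ↔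
      doubleCosetInvariant σ ε g = doubleCosetInvariant σ ε g' := by
  constructor
  · rintro ⟨h₁, h₂, h₁_eq, h₂_eq⟩
    rw [← doubleCosetInvariant_inv_mul_mul hσ g h₁ h₂, ← h₁_eq, ← h₂_eq]
  · exact exists_units_of_doubleCosetInvariant_eq hσ hσ_ne hε hg hg'

theorem eq_zero_or_of_doubleCosetInvariant_eq_some {g : E × E}
    (hg : g.1 * σ g.1 - ε * (g.2 * σ g.2) ≠ 0) {x : E}
    (hx : doubleCosetInvariant σ ε g = some x) :
    x = 0 ∨ (x ≠ 1 ∧ ∃ c : E, c ≠ 0 ∧ x = ε * (c * σ c)) := by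
  obtain ⟨a, b⟩ := g
  by_cases ha : a = 0
  · simp [doubleCosetInvariant, ha] at hx
  have hNa := (mul_apply_eq_zero_iff (σ := σ)).not.2 ha
  simp only [doubleCosetInvariant, ha, if_false, Option.some.injEq] at hx
  subst hx
  by_cases hb : b = 0
  · simp [hb]
  refine Or.inr ⟨fun h1 => hg ?_, b / a, div_ne_zero hb ha, ?_⟩
  · rw [div_eq_one_iff_eq hNa] at h1
    linear_combination -h1
  · rw [div_eq_mul_inv b, mul_apply_mul, mul_apply_inv]
    field_simp

end DoubleCoset

theorem stmt2_general {F E : Type*} [Field F] [Field E] [Algebra F E]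
    (σ : E ≃ₐ[F] E) (hσ2 : ∀ x, σ (σ x) = x) (hσne : ∃ x, σ x ≠ x)
    (Nm : E → E) (hNm : ∀ x, Nm x = x * σ x)
    (ε : F) (hε : ε ≠ 0)
    (Bunits : Set (E × E))
    (hB : Bunits = {g : E × E | Nm g.1 - algebraMap F E ε * Nm g.2 ≠ 0})
    (rel : (E × E) → (E × E) → Prop)
    (hrel : ∀ g g', rel g g' ↔ ∃ h₁ h₂ : Eˣ,
        g'.1 = (h₁ : E)⁻¹ * g.1 * (h₂ : E) ∧ g'.2 = (h₁ : E)⁻¹ * g.2 * σ (h₂ : E))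
    (invar : E × E → Option E)
    (hinvar : ∀ g, invar g = if g.1 = 0 then none
        else some (algebraMap F E ε * Nm g.2 / Nm g.1)) :
    (∀ g ∈ Bunits, ∀ g' ∈ Bunits, (rel g g' ↔ invar g = invar g')) ∧
    (∀ g ∈ Bunits, ∀ x : E, invar g = some x →
        x = 0 ∨ (x ≠ 1 ∧ ∃ c : E, c ≠ 0 ∧ x = algebraMap F E ε * Nm c)) ∧
    (∀ c : E, c ≠ 0 → algebraMap F E ε * Nm c ≠ 1 →
        ∃ g ∈ Bunits, invar g = some (algebraMap F E ε * Nm c)) ∧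
    (∃ g ∈ Bunits, invar g = some 0) ∧
    (∃ g ∈ Bunits, invar g = none) := by
  obtain rfl : Nm = fun x => x * σ x := funext hNm
  obtain rfl : invar = doubleCosetInvariant σ (algebraMap F E ε) := funext hinvar
  subst hB
  have hεE : algebraMap F E ε ≠ 0 := (map_ne_zero _).2 hε
  have ne_zero_of_mem {g : E × E} (hg : g.1 * σ g.1 - algebraMap F E ε * (g.2 * σ g.2) ≠ 0) :
      g ≠ 0 := by
    rintro rfl
    simp at hg
  refine ⟨fun g hg g' hg' => (hrel g g').trans
      (exists_units_iff_doubleCosetInvariant_eq hσ2 hσne hεE (ne_zero_of_mem hg)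
        (ne_zero_of_mem hg')),
    fun g hg x hx => eq_zero_or_of_doubleCosetInvariant_eq_some hg hx, fun c _ hc => ⟨(1, c), ?_, ?_⟩,
    ⟨(1, 0), by simp, by simp [doubleCosetInvariant]⟩,
    ⟨(0, 1), by simpa using hεE, by simp [doubleCosetInvariant]⟩⟩
  · simp only [Set.mem_ofPred_eq, map_one, mul_one]
    exact sub_ne_zero.2 hc.symm
  · simp [doubleCosetInvariant]

/-- for the quaternion algebra `B = E ⊕ Ej` (elements written as pairs
`(a, b)` meaning `a + bj`, with `j² = ε`), the invariant `inv(a + bj) = ε Nm(b)/Nm(a)`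
(with value `0` when `b = 0` and `∞ = none` when `a = 0`) induces a bijection from the
double coset space `E^×\B^×/E^×` for the action `(h₁,h₂)·γ = h₁⁻¹ γ h₂` onto
`(ε Nm(E^×) ∖ {1}) ∪ {0, ∞}`. -/
theorem stmt2 {F E : Type*} [Field F] [Field E] [Algebra F E]
    (σ : E ≃ₐ[F] E) (hσ2 : ∀ x, σ (σ x) = x) (hσne : ∃ x, σ x ≠ x)
    (hfix : ∀ x : E, σ x = x ↔ ∃ y : F, algebraMap F E y = x)
    (Nm : E → E) (hNm : ∀ x, Nm x = x * σ x)
    (ε : F) (hε : ε ≠ 0)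
    (Bunits : Set (E × E))
    (hB : Bunits = {g : E × E | Nm g.1 - algebraMap F E ε * Nm g.2 ≠ 0})
    (rel : (E × E) → (E × E) → Prop)
    (hrel : ∀ g g', rel g g' ↔ ∃ h₁ h₂ : Eˣ,
        g'.1 = (h₁ : E)⁻¹ * g.1 * (h₂ : E) ∧ g'.2 = (h₁ : E)⁻¹ * g.2 * σ (h₂ : E))
    (invar : E × E → Option E)
    (hinvar : ∀ g, invar g = if g.1 = 0 then none
        else some (algebraMap F E ε * Nm g.2 / Nm g.1)) :
    (∀ g ∈ Bunits, ∀ g' ∈ Bunits, (rel g g' ↔ invar g = invar g')) ∧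
    (∀ g ∈ Bunits, ∀ x : E, invar g = some x →
        x = 0 ∨ (x ≠ 1 ∧ ∃ c : E, c ≠ 0 ∧ x = algebraMap F E ε * Nm c)) ∧
    (∀ c : E, c ≠ 0 → algebraMap F E ε * Nm c ≠ 1 →
        ∃ g ∈ Bunits, invar g = some (algebraMap F E ε * Nm c)) ∧
    (∃ g ∈ Bunits, invar g = some 0) ∧
    (∃ g ∈ Bunits, invar g = none) :=
  stmt2_general σ hσ2 hσne Nm hNm ε hε Bunits hB rel hrel invar hinvar
end

section
/- Let $F$ be a local field, $E/F$ a separable quadratic field extension, and $G \cdot w \subset \mathcal{V}$ the orbit of $w = \begin{pmatrix}0 & 1\\ 1 & 0\end{pmatrix}$ under the action $g \cdot s = g s \bar g^t$ of $G = \mathrm{GL}_2(E)$ on invertible Hermitian matrices. Then the invariant map $\mathrm{Inv}\begin{pmatrix}a & b \\ \bar b & d\end{pmatrix} = ad/(b\bar b)$ restricted to the regular part $(G\cdot w) \cap \mathcal{V}_{\mathrm{reg}}$ realizes it as a trivializable principal $E^\times \times F^\times$-bundle (for the action $(a,z)\cdot s = \mathrm{diag}(a,1)\,s\,\mathrm{diag}(\bar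 a,1)z$) over $(1 - \mathrm{Nm}(E^\times)) \setminus \{0\}$; in particular the action of $E^\times \times F^\times$ on each fiber is simply transitive and $\mathrm{Inv}(G\cdot w) = (1 - \mathrm{Nm}(E^\times)) \cup \{\infty\}$. -/
/-!
For `s = g w ḡᵀ = !![a, b; b̄, d]`, multiplicativity of the determinant gives
`a d - b b̄ = det s = -Nm(det g)`, so `Inv s = 1 - Nm(det g / b)` whenever `b ≠ 0`. Every ratio
`det g / b ∈ E^×` occurs (for `g = !![x, 1; u, 1]` with `x` solving a linear equation, where
`u + ū ≠ 0`), and so does `b = 0`. On a fibre, the element `(α, z)` carrying `s` to `t` is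
forced by the entries `d` and `b`: `z = d_t / d_s`, which lies in `F` because both are
`σ`-fixed, and `α = b_t / (z b_s)`; equality of the invariants then matches the `a`-entries.
-/

open Matrix

section Swap

variable {R M : Type*} [CommRing R]

-- `swapAct σ g` is the point `g • w = g w ḡᵀ` of the orbit of `w`.
def swapAct (σ : R → R) (g : Matrix (Fin 2) (Fin 2) R) : Matrix (Fin 2) (Fin 2) R :=
  g * !![0, 1; 1, 0] * (g.map σ)ᵀ

theorem swapAct_apply (σ : R → R) (g : Matrix (Fin 2) (Fin 2) R) (i j : Fin 2) :
    swapAct σ g i j = g i 0 * σ (g j 1) + g i 1 * σ (g j 0) := by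
  simp only [swapAct, mul_apply, of_apply, cons_val', cons_val_fin_one, Fin.sum_univ_two,
    cons_val_zero, cons_val_one, transpose_apply, map_apply, mul_zero, mul_one, zero_add, add_zero]
  ring

variable [FunLike M R R] [RingHomClass M R R] (σ : M)

theorem map_swapAct_apply (hσ : Function.Involutive σ) (g : Matrix (Fin 2) (Fin 2) R)
    (i j : Fin 2) : σ (swapAct σ g i j) = swapAct σ g j i := by
  simp only [swapAct_apply, map_add, map_mul, hσ _]
  ring

theorem det_swapAct (g : Matrix (Fin 2) (Fin 2) R) :
    (swapAct σ g).det = -(g.det * σ g.det) := by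
  have hmap : (g.map σ).det = σ g.det := ((σ : R →+* R).map_det g).symm
  rw [swapAct, det_mul, det_mul, det_transpose, hmap, det_fin_two_of]
  ring

theorem exists_add_map_ne_zero (h : ∃ x, σ x ≠ x) : ∃ u, u + σ u ≠ 0 := by
  by_cases h2 : (2 : R) = 0
  · obtain ⟨x, hx⟩ := h
    exact ⟨x, fun hx0 => hx (by linear_combination hx0 - x * h2)⟩
  · exact ⟨1, by rwa [map_one, one_add_one_eq_two]⟩

end Swap

section Field

variable {E M : Type*} [Field E] [FunLike M E E] [RingHomClass M E E] (σ : M)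

theorem inv_swapAct (hσ : Function.Involutive σ) (g : Matrix (Fin 2) (Fin 2) E)
    (hb : swapAct σ g 0 1 ≠ 0) :
    swapAct σ g 0 0 * swapAct σ g 1 1 / (swapAct σ g 0 1 * σ (swapAct σ g 0 1)) =
      1 - g.det / swapAct σ g 0 1 * σ (g.det / swapAct σ g 0 1) := by
  have hdet := det_swapAct σ g
  rw [det_fin_two, ← map_swapAct_apply σ hσ g 0 1] at hdet
  have hb' : σ (swapAct σ g 0 1) ≠ 0 := map_ne_zero σ |>.mpr hb
  rw [map_div₀]
  field_simp
  linear_combination hdet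

theorem exists_det_eq_mul_swapAct_apply {u : E} (hu : u + σ u ≠ 0) {c : E} (hc : c ≠ 0) :
    ∃ g : Matrix (Fin 2) (Fin 2) E, g.det ≠ 0 ∧ swapAct σ g 0 1 ≠ 0 ∧
      g.det = c * swapAct σ g 0 1 := by
  by_cases hc1 : c = 1
  · refine ⟨1, by simp, ?_, ?_⟩ <;> simp [swapAct_apply, hc1]
  -- `det !![x, 1; u, 1] = x - u` and its `b`-entry is `x + σ u`: solve `x - u = c (x + σ u)`.
  obtain ⟨x, hx⟩ : ∃ x, x * (1 - c) = u + c * σ u :=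
    ⟨_, div_mul_cancel₀ _ (sub_ne_zero.mpr (Ne.symm hc1))⟩
  have hb : swapAct σ !![x, 1; u, 1] 0 1 = x + σ u := by simp [swapAct_apply]
  have hdet : det !![x, 1; u, 1] = c * swapAct σ !![x, 1; u, 1] 0 1 := by
    rw [hb, det_fin_two_of]
    linear_combination hx
  have hb0 : swapAct σ !![x, 1; u, 1] 0 1 ≠ 0 := by
    rw [hb]
    intro h
    exact hu (by linear_combination h * (1 - c) - hx)
  exact ⟨_, hdet ▸ mul_ne_zero hc hb0, hb0, hdet⟩

theorem exists_swapAct_apply_zero_one_eq_zero {u : E} (hu : u + σ u ≠ 0) :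
    ∃ g : Matrix (Fin 2) (Fin 2) E, g.det ≠ 0 ∧ swapAct σ g 0 1 = 0 := by
  refine ⟨!![1, -σ u; 1, u], ?_, ?_⟩
  · simpa [det_fin_two_of] using hu
  · simp [swapAct_apply]

end Field

theorem eq_smul_diagonal_mul_diagonal_iff {R : Type*} [CommRing R]
    {s t : Matrix (Fin 2) (Fin 2) R} (z a b : R) :
    t = z • (diagonal ![a, 1] * s * diagonal ![b, 1]) ↔
      t 0 0 = z * (a * s 0 0 * b) ∧ t 0 1 = z * (a * s 0 1) ∧
        t 1 0 = z * (s 1 0 * b) ∧ t 1 1 = z * s 1 1 := by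
  simp [← Matrix.ext_iff, Fin.forall_fin_two, mul_diagonal, diagonal_mul, and_assoc]

section Transitivity

variable {F E M : Type*} [Field F] [Field E] [Algebra F E] [FunLike M E E] [RingHomClass M E E]

theorem existsUnique_smul_diagonal_mul_diagonal_eq (σ : M)
    (hfix : ∀ x : E, σ x = x → ∃ y : F, algebraMap F E y = x)
    {s t : Matrix (Fin 2) (Fin 2) E} (hs : ∀ i j, σ (s i j) = s j i)
    (ht : ∀ i j, σ (t i j) = t j i) (hsb : s 0 1 ≠ 0) (htb : t 0 1 ≠ 0)
    (hinv : s 0 0 * s 1 1 / (s 0 1 * σ (s 0 1)) = t 0 0 * t 1 1 / (t 0 1 * σ (t 0 1)))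
    (hsad : s 0 0 * s 1 1 ≠ 0) :
    ∃! az : Eˣ × Fˣ, t = algebraMap F E (az.2 : F) •
      (diagonal ![(az.1 : E), 1] * s * diagonal ![σ (az.1 : E), 1]) := by
  have hs10 : s 1 0 ≠ 0 := hs 0 1 ▸ (map_ne_zero σ).mpr hsb
  have ht10 : t 1 0 ≠ 0 := ht 0 1 ▸ (map_ne_zero σ).mpr htb
  rw [hs 0 1, ht 0 1] at hinv
  have hcross : s 0 0 * s 1 1 * (t 0 1 * t 1 0) = t 0 0 * t 1 1 * (s 0 1 * s 1 0) := by
    field_simp at hinv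
    linear_combination hinv
  have htad : t 0 0 * t 1 1 ≠ 0 := fun h =>
    hsad (by simpa [h, hsb, hs10, htb, ht10] using hcross)
  have hs11 : s 1 1 ≠ 0 := right_ne_zero_of_mul hsad
  have ht11 : t 1 1 ≠ 0 := right_ne_zero_of_mul htad
  obtain ⟨z, hz⟩ := hfix (t 1 1 / s 1 1) (by rw [map_div₀, hs, ht])
  have hz0 : z ≠ 0 := by
    rintro rfl
    exact div_ne_zero ht11 hs11 (by rw [← hz, map_zero])
  set a := t 0 1 * s 1 1 / (t 1 1 * s 0 1)
  have ha : a ≠ 0 := div_ne_zero (mul_ne_zero htb hs11) (mul_ne_zero ht11 hsb)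
  refine ⟨(Units.mk0 a ha, Units.mk0 z hz0), ?_, ?_⟩
  · simp only [Units.val_mk0, eq_smul_diagonal_mul_diagonal_iff, hz, a, map_div₀, map_mul, hs,
      ht]
    refine ⟨?_, ?_, ?_, ?_⟩ <;> field_simp
    linear_combination -hcross
  · rintro ⟨a', z'⟩ h
    simp only [eq_smul_diagonal_mul_diagonal_iff] at h
    obtain ⟨-, h01, -, h11⟩ := h
    have hz' : algebraMap F E z' = algebraMap F E z := by
      rw [hz, h11]
      field_simp
    refine Prod.ext (Units.ext ?_) (Units.ext ((algebraMap F E).injective hz'))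
    simp only [Units.val_mk0, a, h01, hz', hz]
    field_simp

end Transitivity

/-- the invariant map realizes the regular part of the orbit `G·w` of
`w = (0 1; 1 0)` under `g·s = g s ḡᵗ`, `G = GL₂(E)`, as a trivial `E^× × F^×`-bundle over
`(1 - Nm(E^×)) ∖ {0}`: the invariant of a regular element of the orbit lies in
`1 - Nm(E^×)`, every value in `(1 - Nm(E^×)) ∖ {0}` (as well as `0` and `∞`) is attained,
and the `E^× × F^×`-action is simply transitive on each fiber over
`(1 - Nm(E^×)) ∖ {0}`; in particular `Inv(G·w) = (1 - Nm(E^×)) ∪ {∞}`. -/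
theorem stmt18 {F E : Type*} [Field F] [Field E] [Algebra F E]
    (σ : E ≃ₐ[F] E) (hσ2 : ∀ x, σ (σ x) = x) (hσne : ∃ x, σ x ≠ x)
    (hfix : ∀ x : E, σ x = x ↔ ∃ y : F, algebraMap F E y = x)
    (w : Matrix (Fin 2) (Fin 2) E) (hw : w = !![0, 1; 1, 0])
    (orb : Set (Matrix (Fin 2) (Fin 2) E))
    (horb : orb = {s | ∃ g : Matrix (Fin 2) (Fin 2) E, g.det ≠ 0 ∧
        s = g * w * (g.map ⇑σ)ᵀ}) :
    -- the invariant of a regular element of the orbit lies in `1 - Nm(E^×)`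
    (∀ s ∈ orb, s 0 1 ≠ 0 →
      ∃ c : E, c ≠ 0 ∧ s 0 0 * s 1 1 / (s 0 1 * σ (s 0 1)) = 1 - c * σ c) ∧
    -- every value `1 - Nm(c)` is attained, as is `∞` (i.e. `b = 0`)
    (∀ c : E, c ≠ 0 → ∃ s ∈ orb, s 0 1 ≠ 0 ∧
      s 0 0 * s 1 1 / (s 0 1 * σ (s 0 1)) = 1 - c * σ c) ∧
    (∃ s ∈ orb, s 0 1 = 0) ∧
    -- simple transitivity of `E^× × F^×` on fibers over `(1 - Nm(E^×)) ∖ {0}`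
    (∀ s ∈ orb, ∀ t ∈ orb, s 0 1 ≠ 0 → t 0 1 ≠ 0 →
      s 0 0 * s 1 1 / (s 0 1 * σ (s 0 1)) = t 0 0 * t 1 1 / (t 0 1 * σ (t 0 1)) →
      s 0 0 * s 1 1 ≠ 0 →
      ∃! az : Eˣ × Fˣ,
        t = algebraMap F E (az.2 : F) •
          (diagonal ![(az.1 : E), 1] * s * diagonal ![σ (az.1 : E), 1])) := by
  subst hw horb
  obtain ⟨u, hu⟩ := exists_add_map_ne_zero σ hσne
  refine ⟨?_, fun c hc => ?_, ?_, ?_⟩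
  · rintro s ⟨g, hg, rfl⟩ hb
    exact ⟨g.det / swapAct σ g 0 1, div_ne_zero hg hb, inv_swapAct σ hσ2 g hb⟩
  · obtain ⟨g, hg, hb, hdet⟩ := exists_det_eq_mul_swapAct_apply σ hu hc
    refine ⟨swapAct σ g, ⟨g, hg, rfl⟩, hb, ?_⟩
    rw [inv_swapAct σ hσ2 g hb, hdet, mul_div_cancel_right₀ _ hb]
  · obtain ⟨g, hg, hb⟩ := exists_swapAct_apply_zero_one_eq_zero σ hu
    exact ⟨swapAct σ g, ⟨g, hg, rfl⟩, hb⟩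
  · rintro s ⟨g, -, rfl⟩ t ⟨h, -, rfl⟩
    exact existsUnique_smul_diagonal_mul_diagonal_eq σ (fun x => (hfix x).mp)
      (map_swapAct_apply σ hσ2 g) (map_swapAct_apply σ hσ2 h)
end
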